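/- Let n and k be relatively prime integers with 1 ≤ k ≤ n−k. Then the translation action of ℤ_n on the Johnson graph J(n,k) — where g ∈ ℤ_n sends a k-subset A of ℤ_n to A + g = {a + g : a ∈ A} — is an action by graph automorphisms of J(n,k), it is free on the vertex set, and it has exactly C(n,k)/n orbits on the vertex set (so J(n,k) is a lift by the group ℤ_n of a base graph with C(n,k)/n vertices). -/

import Mathlib

/-- The Johnson graph `J(n,k)`: vertices are the `k`-element subsets of `ZMod n`,
two subsets being adjacent iff their intersection has exactly `k-1` elements. -/
def johnsonGraph (n k : ℕ) : SimpleGraph {A : Finset (ZMod n) // A.card = k} where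
  Adj A B := ((A : Finset (ZMod n)) ∩ (B : Finset (ZMod n))).card + 1 = k
  symm := ⟨fun A B h => by
    change ((A : Finset (ZMod n)) ∩ (B : Finset (ZMod n))).card + 1 = k at h
    show ((B : Finset (ZMod n)) ∩ (A : Finset (ZMod n))).card + 1 = k
    rwa [Finset.inter_comm]⟩
  loopless := ⟨fun A h => by
    change ((A : Finset (ZMod n)) ∩ (A : Finset (ZMod n))).card + 1 = k at h
    rw [Finset.inter_self, A.2] at h
    omega⟩

/-- Translation of a `k`-subset of `ZMod n` by `g`. -/
def johnsonTranslate {n k : ℕ} (A : {A : Finset (ZMod n) // A.card = k}) (g : ZMod n) :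
    {A : Finset (ZMod n) // A.card = k} :=
  ⟨(A : Finset (ZMod n)).image (· + g), by
    rw [Finset.card_image_of_injective _ (add_left_injective g)]; exact A.2⟩

/-!
Translation by `g` is injective, so it commutes with intersections and preserves their sizes,
hence adjacency. If `A + g = A`, comparing the sums of the elements of both sides gives
`k • g = 0`, and multiplication by `k` is bijective on `ℤ_n` since `gcd(n, k) = 1`; so the action
is free, every orbit has `n` elements, and the `C(n,k)` vertices split into `C(n,k)/n` orbits.
-/

open Finset

theorem Finset.eq_zero_of_image_add_right_eq {G : Type*} [AddCommGroup G] [DecidableEq G]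
    {s : Finset G} {g : G} (hs : (Nat.card G).Coprime #s) (h : s.image (· + g) = s) : g = 0 := by
  have hsum : ∑ x ∈ s, x = ∑ x ∈ s, x + #s • g := calc
    ∑ x ∈ s, x = ∑ x ∈ s.image (· + g), x := by rw [h]
    _ = ∑ x ∈ s, (x + g) := sum_image fun _ _ _ _ ↦ add_right_cancel
    _ = ∑ x ∈ s, x + #s • g := by rw [sum_add_distrib, sum_const]
  exact hs.nsmul_right_bijective.injective (by simpa using hsum)

theorem AddAction.nat_card_eq_mul_of_stabilizer_eq_bot {G X : Type*} [AddGroup G] [AddAction G X]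
    (h : ∀ x : X, stabilizer G x = ⊥) :
    Nat.card X = Nat.card (Quotient (orbitRel G X)) * Nat.card G := by
  rw [Nat.card_congr (selfEquivOrbitsQuotientProd h), Nat.card_prod]

def AddAction.quotEquivOrbitRelQuotient (G X : Type*) [AddGroup G] [AddAction G X] :
    Quot (fun a b : X ↦ ∃ g : G, g +ᵥ a = b) ≃ Quotient (orbitRel G X) :=
  Quot.congrRight fun _ _ ↦ mem_orbit_symm

section Johnson

variable {n k : ℕ}

@[simp]
theorem coe_johnsonTranslate (A : {A : Finset (ZMod n) // #A = k}) (g : ZMod n) :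
    (johnsonTranslate A g : Finset (ZMod n)) = (A : Finset (ZMod n)).image (· + g) :=
  rfl

instance : AddAction (ZMod n) {A : Finset (ZMod n) // #A = k} where
  vadd g A := johnsonTranslate A g
  zero_vadd A := Subtype.ext <| by
    change (A : Finset (ZMod n)).image (· + 0) = A
    simp
  add_vadd g h A := Subtype.ext <| by
    change (A : Finset (ZMod n)).image (· + (g + h)) = ((A : Finset _).image (· + h)).image (· + g)
    rw [image_image]
    congr 1
    funext x
    change x + (g + h) = x + h + g
    rw [add_comm g h, add_assoc]

theorem johnsonGraph_adj_johnsonTranslate_iff (A B : {A : Finset (ZMod n) // #A = k})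
    (g : ZMod n) :
    (johnsonGraph n k).Adj (johnsonTranslate A g) (johnsonTranslate B g) ↔
      (johnsonGraph n k).Adj A B := by
  have hinj : Function.Injective (· + g : ZMod n → ZMod n) := add_left_injective g
  simp only [johnsonGraph, coe_johnsonTranslate, ← image_inter _ _ hinj,
    card_image_of_injective _ hinj]

theorem eq_zero_of_johnsonTranslate_eq_self (hnk : n.Coprime k)
    {A : {A : Finset (ZMod n) // #A = k}} {g : ZMod n} (h : johnsonTranslate A g = A) : g = 0 :=
  Finset.eq_zero_of_image_add_right_eq (by rwa [Nat.card_zmod, A.2]) (congrArg Subtype.val h)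

theorem stabilizer_johnson_eq_bot (hnk : n.Coprime k) (A : {A : Finset (ZMod n) // #A = k}) :
    AddAction.stabilizer (ZMod n) A = ⊥ :=
  (AddSubgroup.eq_bot_iff_forall _).2 fun _ hg ↦ eq_zero_of_johnsonTranslate_eq_self hnk hg

end Johnson

theorem stmt_6_general (n k : ℕ) (hk2 : k ≤ n - k) (hgcd : Nat.gcd n k = 1) :
    -- translations act by graph automorphisms on J(n,k)
    (∀ (g : ZMod n) (A B : {A : Finset (ZMod n) // A.card = k}),
      (johnsonGraph n k).Adj A B ↔
        (johnsonGraph n k).Adj (johnsonTranslate A g) (johnsonTranslate B g)) ∧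
    -- the action is free on the vertex set
    (∀ (g : ZMod n) (A : {A : Finset (ZMod n) // A.card = k}),
      johnsonTranslate A g = A → g = 0) ∧
    -- the action has exactly C(n,k)/n orbits on the vertex set
    Nat.card (Quot fun A B : {A : Finset (ZMod n) // A.card = k} =>
      ∃ g : ZMod n, johnsonTranslate A g = B) = n.choose k / n := by
  have hn : 0 < n := Nat.pos_of_ne_zero <| by
    rintro rfl
    rw [Nat.gcd_zero_left] at hgcd
    omega
  have : NeZero n := ⟨hn.ne'⟩
  refine ⟨fun g A B ↦ (johnsonGraph_adj_johnsonTranslate_iff A B g).symm,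
    fun _ _ ↦ eq_zero_of_johnsonTranslate_eq_self hgcd, ?_⟩
  have hcard := AddAction.nat_card_eq_mul_of_stabilizer_eq_bot (stabilizer_johnson_eq_bot hgcd)
  rw [Nat.card_eq_fintype_card, Fintype.card_finset_len, ZMod.card, Nat.card_zmod] at hcard
  refine (Nat.card_congr (AddAction.quotEquivOrbitRelQuotient (ZMod n) _)).trans ?_
  rw [hcard, Nat.mul_div_cancel _ hn]

theorem stmt_6 (n k : ℕ) (hk1 : 1 ≤ k) (hk2 : k ≤ n - k) (hgcd : Nat.gcd n k = 1) :
    -- translations act by graph automorphisms on J(n,k)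
    (∀ (g : ZMod n) (A B : {A : Finset (ZMod n) // A.card = k}),
      (johnsonGraph n k).Adj A B ↔
        (johnsonGraph n k).Adj (johnsonTranslate A g) (johnsonTranslate B g)) ∧
    -- the action is free on the vertex set
    (∀ (g : ZMod n) (A : {A : Finset (ZMod n) // A.card = k}),
      johnsonTranslate A g = A → g = 0) ∧
    -- the action has exactly C(n,k)/n orbits on the vertex set
    Nat.card (Quot fun A B : {A : Finset (ZMod n) // A.card = k} =>
      ∃ g : ZMod n, johnsonTranslate A g = B) = n.choose k / n :=
  stmt_6_general n k hk2 hgcd
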